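/- arXiv:2102.11340 — 3 statements merged into one kernel-verified Lean document; each statement's English description precedes it below -/
import Mathlib

section
/- Let d ∈ ℕ and δ ∈ (0, π). Then N_{d,δ} ≤ ∫_{−π}^{π} |g_{d,δ}(x)| dx ≤ N_{d,δ} + 4π. In particular, if N_{d,δ} > 0 then the normalized function M_{d,δ} = g_{d,δ}/N_{d,δ} satisfies 1 ≤ ∫_{−π}^{π} |M_{d,δ}(x)| dx ≤ 1 + 4π/N_{d,δ}. -/
open Real

/-- `g_{d,δ}(x) = T_d(1 + 2(cos x − cos δ)/(1 + cos δ))`. -/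
noncomputable def chebG (d : ℕ) (δ x : ℝ) : ℝ :=
  (Polynomial.Chebyshev.T ℝ d).eval (1 + 2 * (Real.cos x - Real.cos δ) / (1 + Real.cos δ))

/-- `N_{d,δ} = ∫_{−π}^{π} g_{d,δ}(x) dx`. -/
noncomputable def chebN (d : ℕ) (δ : ℝ) : ℝ := ∫ x in (-π)..π, chebG d δ x

/-!
The argument `u = 1 + 2(cos x − cos δ)/(1 + cos δ)` of `T_d` never drops below `-1`. On `[-1, 1]`
the values of `T_d` lie in `[-1, 1]` and on `[1, ∞)` they are at least `1`, so pointwise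
`|g| ≤ g + 2`; integrating over an interval of length `2π` gives the bound `N + 4π`.
-/

open Polynomial.Chebyshev intervalIntegral

lemma abs_eval_T_real_le_eval_T_real_add_two (n : ℤ) {u : ℝ} (hu : -1 ≤ u) :
    |(T ℝ n).eval u| ≤ (T ℝ n).eval u + 2 := by
  rcases le_or_gt u 1 with hu1 | hu1
  · obtain ⟨hlo, hhi⟩ := eval_T_real_mem_Icc n ⟨hu, hu1⟩
    rw [abs_le]
    constructor <;> linarith
  · have := one_le_eval_T_real n hu1.le
    rw [abs_of_nonneg (by linarith)]
    linarith

lemma integral_abs_le_integral_add_mul {f : ℝ → ℝ} {a b c : ℝ} (hab : a ≤ b)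
    (hf : IntervalIntegrable f MeasureTheory.volume a b)
    (h : ∀ x ∈ Set.Icc a b, |f x| ≤ f x + c) :
    ∫ x in a..b, |f x| ≤ (∫ x in a..b, f x) + c * (b - a) := by
  calc ∫ x in a..b, |f x| ≤ ∫ x in a..b, (f x + c) :=
        integral_mono_on hab hf.abs (hf.add intervalIntegrable_const) h
    _ = (∫ x in a..b, f x) + c * (b - a) := by
        rw [integral_add hf intervalIntegrable_const, integral_const, smul_eq_mul, mul_comm]

lemma integral_abs_div_const (f : ℝ → ℝ) (a b r : ℝ) :
    ∫ x in a..b, |f x / r| = (∫ x in a..b, |f x|) / |r| := by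
  simp_rw [abs_div]
  exact integral_div _ _

lemma continuous_chebG (d : ℕ) (δ : ℝ) : Continuous (chebG d δ) :=
  (T ℝ d).continuous.comp (by fun_prop)

lemma abs_chebG_le_chebG_add_two (d : ℕ) {δ : ℝ} (hδ : -1 < cos δ) (x : ℝ) :
    |chebG d δ x| ≤ chebG d δ x + 2 := by
  apply abs_eval_T_real_le_eval_T_real_add_two
  have hden : 0 < 1 + cos δ := by linarith
  have : 0 ≤ 2 * (1 + cos x) / (1 + cos δ) :=
    div_nonneg (by linarith [neg_one_le_cos x]) hden.le
  calc (-1 : ℝ) ≤ -1 + 2 * (1 + cos x) / (1 + cos δ) := by linarith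
    _ = 1 + 2 * (cos x - cos δ) / (1 + cos δ) := by field_simp; ring

theorem stmt_1 (d : ℕ) (δ : ℝ) (hδ : δ ∈ Set.Ioo 0 π) :
    chebN d δ ≤ (∫ x in (-π)..π, |chebG d δ x|) ∧
    (∫ x in (-π)..π, |chebG d δ x|) ≤ chebN d δ + 4 * π ∧
    (0 < chebN d δ →
      1 ≤ (∫ x in (-π)..π, |chebG d δ x / chebN d δ|) ∧
      (∫ x in (-π)..π, |chebG d δ x / chebN d δ|) ≤ 1 + 4 * π / chebN d δ) := by
  have hcos : -1 < cos δ := by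
    simpa using cos_lt_cos_of_nonneg_of_le_pi hδ.1.le le_rfl hδ.2
  have hle : -π ≤ π := by linarith [pi_pos]
  have lower : chebN d δ ≤ ∫ x in (-π)..π, |chebG d δ x| :=
    (le_abs_self _).trans (abs_integral_le_integral_abs hle)
  have upper : (∫ x in (-π)..π, |chebG d δ x|) ≤ chebN d δ + 4 * π := by
    have := integral_abs_le_integral_add_mul hle ((continuous_chebG d δ).intervalIntegrable _ _)
      (fun x _ => abs_chebG_le_chebG_add_two d hcos x)
    rw [chebN]
    linarith
  refine ⟨lower, upper, fun hN => ?_⟩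
  rw [integral_abs_div_const, abs_of_pos hN, le_div_iff₀ hN, div_le_iff₀ hN, add_mul,
    div_mul_cancel₀ _ hN.ne']
  constructor <;> linarith
end

section
/- Let δ ∈ (0, π) and let x ∈ ℝ satisfy |x| ≤ δ. Then √((cos x − cos δ)/(1 + cos δ)) ≥ tan(δ/2) · (1 − x²/(4 sin²(δ/2))). -/
/-!
With `s = sin (δ/2)`, `c = cos (δ/2)` and `q = sin (x/2)`, the half-angle formulas turn the
radicand into `(s² - q²) / c²` and the left-hand side into `(s / c) (1 - t)` with
`t = x² / (4 s²)`. Since `q² ≤ (x/2)²`, we have `s² - q² ≥ s² (1 - t)`, and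
`s (1 - t) ≤ √(s² (1 - t))` because `(1 - t)² ≤ 1 - t` whenever `1 - t ∈ [0, 1]`
(for `t ≥ 1` the left-hand side is nonpositive).
-/

open Real

theorem cos_sub_cos_div_one_add_cos (x y : ℝ) :
    (cos x - cos y) / (1 + cos y) = (sin (y / 2) ^ 2 - sin (x / 2) ^ 2) / cos (y / 2) ^ 2 := by
  have hx : cos x = 1 - 2 * sin (x / 2) ^ 2 := by
    rw [← cos_two_mul_eq_one_sub, mul_div_cancel₀ x two_ne_zero]
  have hy : cos y = 2 * cos (y / 2) ^ 2 - 1 := by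
    rw [← cos_two_mul, mul_div_cancel₀ y two_ne_zero]
  rw [hx, hy, ← mul_div_mul_left _ (cos (y / 2) ^ 2) (two_ne_zero' ℝ)]
  congr 1
  · linear_combination -2 * sin_sq_add_cos_sq (y / 2)
  · ring

theorem mul_one_sub_le_sqrt {a t b : ℝ} (ha : 0 ≤ a) (ht : 0 ≤ t) (h : a ^ 2 * (1 - t) ≤ b) :
    a * (1 - t) ≤ √b := by
  rcases le_total 1 t with ht1 | ht1
  · exact (mul_nonpos_of_nonneg_of_nonpos ha (by linarith)).trans (sqrt_nonneg b)
  · refine le_sqrt_of_sq_le ?_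
    calc (a * (1 - t)) ^ 2 = a ^ 2 * (1 - t) ^ 2 := by ring
      _ ≤ a ^ 2 * (1 - t) := by gcongr; nlinarith
      _ ≤ b := h

theorem stmt_3_general (δ x : ℝ) (hδ : δ ∈ Set.Ioo 0 π) :
    Real.tan (δ / 2) * (1 - x ^ 2 / (4 * Real.sin (δ / 2) ^ 2)) ≤
      Real.sqrt ((Real.cos x - Real.cos δ) / (1 + Real.cos δ)) := by
  obtain ⟨hδ0, hδπ⟩ := hδ
  have hs : 0 < sin (δ / 2) := sin_pos_of_pos_of_lt_pi (by linarith) (by linarith)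
  have hc : 0 < cos (δ / 2) := cos_pos_of_mem_Ioo ⟨by linarith, by linarith⟩
  rw [cos_sub_cos_div_one_add_cos, sqrt_div' _ (sq_nonneg _), sqrt_sq hc.le, tan_eq_sin_div_cos,
    div_mul_eq_mul_div]
  gcongr
  refine mul_one_sub_le_sqrt hs.le (by positivity) ?_
  have hq : sin (x / 2) ^ 2 ≤ (x / 2) ^ 2 := sin_sq_le_sq
  calc sin (δ / 2) ^ 2 * (1 - x ^ 2 / (4 * sin (δ / 2) ^ 2)) = sin (δ / 2) ^ 2 - (x / 2) ^ 2 := by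
        field_simp; ring
    _ ≤ sin (δ / 2) ^ 2 - sin (x / 2) ^ 2 := by linarith

theorem stmt_3 (δ x : ℝ) (hδ : δ ∈ Set.Ioo 0 π) (hx : |x| ≤ δ) :
    Real.tan (δ / 2) * (1 - x ^ 2 / (4 * Real.sin (δ / 2) ^ 2)) ≤
      Real.sqrt ((Real.cos x - Real.cos δ) / (1 + Real.cos δ)) :=
  stmt_3_general δ x hδ
end

section
/- Let d ∈ ℕ, let δ ∈ (0, π/2) satisfy tan(δ/2) ≤ 1 − 1/√2, and let x ∈ ℝ with |x| ≤ δ. Then T_d(1 + 2(cos x − cos δ)/(1 + cos δ)) ≥ (1/2) · e^{√2 · d · tan(δ/2)} · exp(−d x² / (√2 sin δ)). -/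
/-!
Put `τ = tan (δ / 2)`, `z = (cos x - cos δ) / (1 + cos δ) ≥ 0` and `u = √z`. Since
`1 + 2 u² = cosh (2 arsinh u)`, the Chebyshev value is `cosh (2 d arsinh u) ≥ exp (2 d arsinh u) / 2`,
so it suffices to bound the exponent: `√2 τ - x² / (√2 sin δ) ≤ 2 arsinh u`.
Half-angle formulas give `τ² - z = sin² (x / 2) / cos² (δ / 2)`, hence
`2 sin δ (τ² - z) = 4 τ sin² (x / 2) ≤ τ x²`, which turns the left side into at most `√2 u² / τ`.
As `u ≤ τ` and `√2 (1 + τ) ≤ 2` by the hypothesis on `τ`, this is at most `2 u / (1 + u)`,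
and `u / (1 + u) ≤ log (1 + u) ≤ arsinh u`.
-/

open Real Polynomial

namespace Real

lemma exp_div_two_le_cosh (t : ℝ) : exp t / 2 ≤ cosh t := by
  rw [cosh_eq]
  linarith [exp_pos (-t)]

lemma cosh_two_mul_arsinh (u : ℝ) : cosh (2 * arsinh u) = 1 + 2 * u ^ 2 := by
  rw [cosh_two_mul, cosh_sq, sinh_arsinh]
  ring

lemma log_one_add_le_arsinh {u : ℝ} (hu : 0 ≤ u) : log (1 + u) ≤ arsinh u := by
  refine log_le_log (by linarith) ?_
  have : 1 ≤ √(1 + u ^ 2) := one_le_sqrt.mpr (by nlinarith)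
  linarith

lemma div_one_add_le_arsinh {u : ℝ} (hu : 0 ≤ u) : u / (1 + u) ≤ arsinh u :=
  calc u / (1 + u) = 1 - (1 + u)⁻¹ := by field_simp; ring
    _ ≤ log (1 + u) := one_sub_inv_le_log_of_pos (by linarith)
    _ ≤ arsinh u := log_one_add_le_arsinh hu

lemma tan_half_sq_sub_cos_sub_cos_div {x δ : ℝ} (hδ : cos (δ / 2) ≠ 0) :
    tan (δ / 2) ^ 2 - (cos x - cos δ) / (1 + cos δ) = sin (x / 2) ^ 2 / cos (δ / 2) ^ 2 := by
  have hcos_δ : cos δ = 2 * cos (δ / 2) ^ 2 - 1 := by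
    rw [← cos_two_mul, mul_div_cancel₀ _ two_ne_zero]
  have hcos_x : cos x = 1 - 2 * sin (x / 2) ^ 2 := by
    rw [← cos_two_mul_eq_one_sub, mul_div_cancel₀ _ two_ne_zero]
  rw [tan_eq_sin_div_cos, hcos_δ, hcos_x]
  field_simp
  linear_combination 2 * cos (δ / 2) ^ 2 * sin_sq_add_cos_sq (δ / 2)

lemma two_mul_sin_mul_tan_half_sq_sub_le {x δ : ℝ} (hδ : cos (δ / 2) ≠ 0) (hτ : 0 ≤ tan (δ / 2)) :
    2 * sin δ * (tan (δ / 2) ^ 2 - (cos x - cos δ) / (1 + cos δ)) ≤ tan (δ / 2) * x ^ 2 := by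
  have hsin_δ : sin δ = 2 * sin (δ / 2) * cos (δ / 2) := by
    rw [← sin_two_mul, mul_div_cancel₀ _ two_ne_zero]
  calc 2 * sin δ * (tan (δ / 2) ^ 2 - (cos x - cos δ) / (1 + cos δ))
      = tan (δ / 2) * (4 * sin (x / 2) ^ 2) := by
        rw [tan_half_sq_sub_cos_sub_cos_div hδ, hsin_δ, tan_eq_sin_div_cos]
        field_simp
        ring
    _ ≤ tan (δ / 2) * x ^ 2 := by
        gcongr
        linarith [sin_sq_le_sq (x := x / 2)]

lemma sqrt_two_mul_sub_div_le {τ z s X : ℝ} (hτ : 0 < τ) (hs : 0 < s)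
    (h : 2 * s * (τ ^ 2 - z) ≤ τ * X) : √2 * τ - X / (√2 * s) ≤ √2 * z / τ := by
  have hsqrt : √2 * √2 = 2 := mul_self_sqrt zero_le_two
  have hkey : √2 * (τ ^ 2 - z) / τ ≤ X / (√2 * s) := by
    rw [div_le_div_iff₀ hτ (by positivity)]
    linear_combination (τ ^ 2 - z) * s * hsqrt + h
  have hsplit : √2 * τ - √2 * z / τ = √2 * (τ ^ 2 - z) / τ := by
    field_simp
  linarith

lemma sqrt_two_mul_sq_div_le_two_mul_div_one_add {u τ : ℝ} (hu : 0 ≤ u) (huτ : u ≤ τ)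
    (hτ : √2 * τ ≤ √2 - 1) : √2 * u ^ 2 / τ ≤ 2 * (u / (1 + u)) := by
  rcases hu.eq_or_lt with rfl | hu
  · simp
  have hsqrt : √2 ≤ 3 / 2 := by nlinarith [sq_sqrt (zero_le_two (α := ℝ)), sqrt_nonneg 2]
  calc √2 * u ^ 2 / τ ≤ √2 * u ^ 2 / u := by gcongr
    _ = √2 * (1 + u) * (u / (1 + u)) := by field_simp
    _ ≤ 2 * (u / (1 + u)) := by
        gcongr
        nlinarith [sqrt_nonneg 2]

lemma cos_sub_cos_div_one_add_cos_nonneg {x δ : ℝ} (hδ : δ ≤ π) (hx : |x| ≤ δ) :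
    0 ≤ (cos x - cos δ) / (1 + cos δ) := by
  have hcos : cos δ ≤ cos x := by
    rw [← cos_abs x]
    exact cos_le_cos_of_nonneg_of_le_pi (abs_nonneg x) hδ hx
  exact div_nonneg (by linarith) (by linarith [neg_one_le_cos δ])

lemma sqrt_two_mul_tan_half_sub_le_two_mul_arsinh {x δ : ℝ} (hδ : δ ∈ Set.Ioo 0 (π / 2))
    (htan : tan (δ / 2) ≤ 1 - 1 / √2) (hx : |x| ≤ δ) :
    √2 * tan (δ / 2) - x ^ 2 / (√2 * sin δ) ≤
      2 * arsinh √((cos x - cos δ) / (1 + cos δ)) := by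
  obtain ⟨hδ0, hδπ⟩ := hδ
  have hz := cos_sub_cos_div_one_add_cos_nonneg (by linarith [pi_pos]) hx
  set z := (cos x - cos δ) / (1 + cos δ)
  set τ := tan (δ / 2)
  have hcos_half : cos (δ / 2) ≠ 0 := (cos_pos_of_mem_Ioo ⟨by linarith, by linarith⟩).ne'
  have hτ : 0 < τ := tan_pos_of_pos_of_lt_pi_div_two (by linarith) (by linarith)
  have hsin : 0 < sin δ := sin_pos_of_pos_of_lt_pi hδ0 (by linarith)
  have hzτ : z ≤ τ ^ 2 := by
    have := tan_half_sq_sub_cos_sub_cos_div (x := x) hcos_half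
    linarith [div_nonneg (sq_nonneg (sin (x / 2))) (sq_nonneg (cos (δ / 2)))]
  have huτ : √z ≤ τ := (sqrt_le_sqrt hzτ).trans_eq (sqrt_sq hτ.le)
  have hτ_small : √2 * τ ≤ √2 - 1 := by
    have := mul_le_mul_of_nonneg_left htan (sqrt_nonneg 2)
    rwa [mul_sub, mul_one, mul_one_div_cancel (by positivity)] at this
  calc √2 * τ - x ^ 2 / (√2 * sin δ) ≤ √2 * z / τ :=
        sqrt_two_mul_sub_div_le hτ hsin (two_mul_sin_mul_tan_half_sq_sub_le hcos_half hτ.le)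
    _ = √2 * √z ^ 2 / τ := by rw [sq_sqrt hz]
    _ ≤ 2 * (√z / (1 + √z)) :=
        sqrt_two_mul_sq_div_le_two_mul_div_one_add (sqrt_nonneg z) huτ hτ_small
    _ ≤ 2 * arsinh √z := by
        gcongr
        exact div_one_add_le_arsinh (sqrt_nonneg z)

end Real

lemma Polynomial.Chebyshev.exp_div_two_le_T_eval_one_add_two_mul_sq (n : ℕ) (u : ℝ) :
    exp (2 * n * arsinh u) / 2 ≤ (Chebyshev.T ℝ n).eval (1 + 2 * u ^ 2) := by
  rw [← cosh_two_mul_arsinh, ← Int.cast_natCast, Chebyshev.T_real_cosh, Int.cast_natCast,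
    ← mul_assoc, mul_comm (n : ℝ)]
  exact exp_div_two_le_cosh _

theorem stmt_4 (d : ℕ) (δ x : ℝ) (hδ : δ ∈ Set.Ioo 0 (π / 2))
    (htan : Real.tan (δ / 2) ≤ 1 - 1 / Real.sqrt 2) (hx : |x| ≤ δ) :
    (1 / 2) * Real.exp (Real.sqrt 2 * d * Real.tan (δ / 2)) *
        Real.exp (-(d * x ^ 2) / (Real.sqrt 2 * Real.sin δ)) ≤
      (Polynomial.Chebyshev.T ℝ d).eval
        (1 + 2 * (Real.cos x - Real.cos δ) / (1 + Real.cos δ)) := by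
  have hz := cos_sub_cos_div_one_add_cos_nonneg (by linarith [hδ.2, pi_pos]) hx
  have hexponent := sqrt_two_mul_tan_half_sub_le_two_mul_arsinh hδ htan hx
  calc (1 / 2) * exp (√2 * d * tan (δ / 2)) * exp (-(d * x ^ 2) / (√2 * sin δ))
      = exp (d * (√2 * tan (δ / 2) - x ^ 2 / (√2 * sin δ))) / 2 := by
        rw [mul_assoc, ← exp_add]
        ring_nf
    _ ≤ exp (2 * d * arsinh √((cos x - cos δ) / (1 + cos δ))) / 2 := by
        gcongr exp ?_ / 2
        linarith [mul_le_mul_of_nonneg_left hexponent d.cast_nonneg]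
    _ ≤ (Chebyshev.T ℝ d).eval (1 + 2 * √((cos x - cos δ) / (1 + cos δ)) ^ 2) :=
        Chebyshev.exp_div_two_le_T_eval_one_add_two_mul_sq d _
    _ = (Chebyshev.T ℝ d).eval (1 + 2 * (cos x - cos δ) / (1 + cos δ)) := by
        rw [sq_sqrt hz, mul_div_assoc]
end
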